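/- arXiv:2012.00460 — 2 statements merged into one kernel-verified Lean document; each statement's English description precedes it below -/
import Mathlib

section
/- Let r > 1/2 and p ≥ D ≥ 1 be integers. Then there exists a constant C_r depending only on r such that ∑_{k=D+1}^∞ log(k)/k^{2r} ≤ C_r ( log(p)/D^{2r-1} + 1/p^{r-1/2} ). -/
/-!
Write `r = a + 1/2`. Applying `log x ≤ x^a / a` to `x = k/p` gives
`log k ≤ log p + (k/p)^a / a`, so each term `log k / k^(2r)` is at most
`log p · k^(-2r) + k^(-(a+1)) / (a p^a)`. Both tails are bounded by comparison with
`∫_D^∞ x^(-s) dx = D^(1-s)/(s-1)`, and `D^(-a) ≤ 1` turns the second one into `1/(a² p^a)`.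
-/

open Finset Real

lemma tsum_ite_le_of_sum_Ico_le {f : ℕ → ℝ} {D : ℕ} {c : ℝ} (hf : ∀ k, D + 1 ≤ k → 0 ≤ f k)
    (h : ∀ n, ∑ k ∈ Ico (D + 1) n, f k ≤ c) :
    ∑' k, (if D + 1 ≤ k then f k else 0) ≤ c := by
  refine Real.tsum_le_of_sum_range_le (fun k => ?_) fun n => ?_
  · split_ifs with hk
    exacts [hf k hk, le_rfl]
  · rw [← sum_filter, range_eq_Ico, Ico_filter_le, zero_max]
    exact h n

lemma sum_Ico_rpow_inv_le {s : ℝ} (hs : 1 < s) {D : ℕ} (hD : 0 < D) (n : ℕ) :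
    ∑ k ∈ Ico (D + 1) n, ((k : ℝ) ^ s)⁻¹ ≤ (D : ℝ) ^ (1 - s) / (s - 1) := by
  set N := max D n
  have hDN : D ≤ N := le_max_left _ _
  have hD0 : (0 : ℝ) < D := by exact_mod_cast hD
  have hN0 : (0 : ℝ) < N := hD0.trans_le (by exact_mod_cast hDN)
  have h0 : (0 : ℝ) ∉ Set.uIcc (D : ℝ) N := by
    rw [Set.uIcc_of_le (by exact_mod_cast hDN)]
    exact fun h => hD0.not_ge h.1
  have hanti : AntitoneOn (fun x : ℝ => x ^ (-s)) (Set.Icc (D : ℝ) N) :=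
    fun x hx y _ hxy => rpow_le_rpow_of_nonpos (hD0.trans_le hx.1) hxy (by linarith)
  calc ∑ k ∈ Ico (D + 1) n, ((k : ℝ) ^ s)⁻¹
      ≤ ∑ k ∈ Ico (D + 1) (N + 1), ((k : ℝ) ^ s)⁻¹ :=
        sum_le_sum_of_subset_of_nonneg (Ico_subset_Ico_right (by omega))
          fun k _ _ => by positivity
    _ = ∑ i ∈ Ico D N, (((i + 1 : ℕ) : ℝ)) ^ (-s) := by
        rw [← sum_Ico_add']
        exact sum_congr rfl fun i _ => (rpow_neg (by positivity) s).symm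
    _ ≤ ∫ x in (D : ℝ)..N, x ^ (-s) := hanti.sum_le_integral_Ico hDN
    _ = ((D : ℝ) ^ (1 - s) - (N : ℝ) ^ (1 - s)) / (s - 1) := by
        rw [integral_rpow (Or.inr ⟨by linarith, h0⟩), neg_add_eq_sub,
          div_eq_div_iff (by linarith) (by linarith)]
        ring
    _ ≤ (D : ℝ) ^ (1 - s) / (s - 1) := by
        gcongr
        linarith [rpow_nonneg hN0.le (1 - s)]

lemma log_le_log_add_rpow_div {x y a : ℝ} (hx : 0 < x) (hy : 0 < y) (ha : 0 < a) :
    log x ≤ log y + (x / y) ^ a / a := by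
  have h := log_le_rpow_div (div_pos hx hy).le ha
  rw [log_div hx.ne' hy.ne'] at h
  linarith

lemma log_div_rpow_le {x y a s : ℝ} (hx : 0 < x) (hy : 0 < y) (ha : 0 < a) :
    log x / x ^ s ≤ log y * (x ^ s)⁻¹ + (a * y ^ a)⁻¹ * (x ^ (s - a))⁻¹ := by
  calc log x / x ^ s ≤ (log y + (x / y) ^ a / a) / x ^ s := by
        gcongr
        exact log_le_log_add_rpow_div hx hy ha
    _ = log y * (x ^ s)⁻¹ + (a * y ^ a)⁻¹ * (x ^ (s - a))⁻¹ := by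
        rw [div_rpow hx.le hy.le, rpow_sub hx]
        have := rpow_pos_of_pos hx a
        have := rpow_pos_of_pos hx s
        have := rpow_pos_of_pos hy a
        field_simp

lemma tsum_ite_log_div_rpow_le {s a y : ℝ} (ha : 0 < a) (has : a < s - 1) (hy : 1 ≤ y)
    {D : ℕ} (hD : 0 < D) :
    ∑' k : ℕ, (if D + 1 ≤ k then log k / (k : ℝ) ^ s else 0) ≤
      log y * ((D : ℝ) ^ (1 - s) / (s - 1)) +
        (a * y ^ a)⁻¹ * ((D : ℝ) ^ (1 - (s - a)) / (s - a - 1)) := by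
  have hy0 : 0 < y := by linarith
  refine tsum_ite_le_of_sum_Ico_le (fun k hk => ?_) fun n => ?_
  · have : (1 : ℝ) ≤ k := by exact_mod_cast (by omega : 1 ≤ k)
    have := log_nonneg this
    positivity
  calc ∑ k ∈ Ico (D + 1) n, log k / (k : ℝ) ^ s
      ≤ ∑ k ∈ Ico (D + 1) n,
          (log y * ((k : ℝ) ^ s)⁻¹ + (a * y ^ a)⁻¹ * ((k : ℝ) ^ (s - a))⁻¹) := by
        refine sum_le_sum fun k hk => log_div_rpow_le ?_ hy0 ha
        have := (mem_Ico.1 hk).1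
        exact_mod_cast (by omega : 0 < k)
    _ = log y * ∑ k ∈ Ico (D + 1) n, ((k : ℝ) ^ s)⁻¹ +
          (a * y ^ a)⁻¹ * ∑ k ∈ Ico (D + 1) n, ((k : ℝ) ^ (s - a))⁻¹ := by
        rw [sum_add_distrib, mul_sum, mul_sum]
    _ ≤ _ := by
        have := log_nonneg hy
        gcongr <;> exact sum_Ico_rpow_inv_le (by linarith) hD n

/-- For `r > 1/2` there is a constant `C_r` (depending only on `r`) such that for all
integers `1 ≤ D ≤ p`,
`∑_{k=D+1}^∞ log(k)/k^{2r} ≤ C_r (log(p)/D^{2r-1} + 1/p^{r-1/2})`. -/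
theorem stmt0 (r : ℝ) (hr : 1 / 2 < r) :
    ∃ C : ℝ, 0 < C ∧ ∀ (D p : ℕ), 1 ≤ D → D ≤ p →
      (∑' k : ℕ, if D + 1 ≤ k then Real.log k / (k : ℝ) ^ (2 * r) else 0)
        ≤ C * (Real.log p / (D : ℝ) ^ (2 * r - 1) + 1 / (p : ℝ) ^ (r - 1 / 2)) := by
  obtain ⟨a, rfl⟩ : ∃ a, r = a + 1 / 2 := ⟨r - 1 / 2, by ring⟩
  have ha : 0 < a := by linarith
  simp only [show 2 * (a + 1 / 2) = 2 * a + 1 by ring, add_sub_cancel_right]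
  refine ⟨1 / (2 * a) + 1 / (a * a), by positivity, fun D p hD hDp => ?_⟩
  have hp : (1 : ℝ) ≤ p := by exact_mod_cast hD.trans hDp
  have hD1 : (1 : ℝ) ≤ D := by exact_mod_cast hD
  have hbound := tsum_ite_log_div_rpow_le (s := 2 * a + 1) ha (by linarith) hp hD
  have hDa : (D : ℝ) ^ (-a) ≤ 1 := rpow_le_one_of_one_le_of_nonpos hD1 (by linarith)
  rw [show 1 - (2 * a + 1) = -(2 * a) by ring, rpow_neg (by positivity),
    show 1 - (2 * a + 1 - a) = -a by ring, show 2 * a + 1 - a - 1 = a by ring,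
    add_sub_cancel_right] at hbound
  have hX : 0 ≤ log p / (D : ℝ) ^ (2 * a) := div_nonneg (log_nonneg hp) (by positivity)
  have hY : 0 ≤ 1 / (p : ℝ) ^ a := by positivity
  calc _ ≤ _ := hbound
    _ = 1 / (2 * a) * (log p / (D : ℝ) ^ (2 * a)) + (a * (p : ℝ) ^ a)⁻¹ * ((D : ℝ) ^ (-a) / a) := by
        ring
    _ ≤ 1 / (2 * a) * (log p / (D : ℝ) ^ (2 * a)) + (a * (p : ℝ) ^ a)⁻¹ * (1 / a) := by gcongr
    _ = 1 / (2 * a) * (log p / (D : ℝ) ^ (2 * a)) + 1 / (a * a) * (1 / (p : ℝ) ^ a) := by ring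
    _ ≤ _ := by nlinarith [div_pos one_pos (mul_pos two_pos ha), div_pos one_pos (mul_pos ha ha)]
end

section
/- For every δ > 0 and integers s, p with 1 ≤ s < p/3, consider Θ(δ,s) = { θ ∈ {−δ√(2/s), 0, δ√(2/s)}^p : ‖θ‖_0 = s }. There exists a subset Θ̃(δ,s) ⊆ Θ(δ,s) with |Θ̃(δ,s)| ≥ exp( (s/2) log((p−s)/(s/2)) ) such that for any distinct θ, θ' ∈ Θ̃(δ,s): δ² ≤ ‖θ − θ'‖₂² ≤ 8δ². -/
/-!
A Gilbert–Varshamov argument. Put `a = δ √(2/s)` and `r = ⌊(s-1)/2⌋`. A maximal family of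
`s`-sparse vectors in `{-a, 0, a}^p` with pairwise Hamming distances `> r` covers all
`C(p,s) 2^s` such vectors by Hamming balls of radius `r`, each containing `∑_{t ≤ r} C(p,t) 2^t`
ternary words, so the family is large. For `t < s` the terms `C(p,t) 2^t` grow by a factor at
least `x = 2(p-s)/s ≥ 4`, so that sum is at most `2 C(p,r) 2^r ≤ C(p,s) 2^s / √x^s`.
Two members differ in `≥ s/2` coordinates, each contributing at least `a² = 2δ²/s` to the squared
distance, while every member has squared norm `s a² = 2δ²`.
-/

open Finset

theorem Finset.exists_pairwise_not_rel_card_le_card_mul {α : Type*} [DecidableEq α]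
    (V : Finset α) (R : α → α → Prop) [DecidableRel R] (hrefl : ∀ a, R a a)
    (hsymm : ∀ a b, R a b → R b a) (B : ℕ) (hB : ∀ c ∈ V, #{v ∈ V | R c v} ≤ B) :
    ∃ C ⊆ V, (C : Set α).Pairwise (fun x y => ¬ R x y) ∧ #V ≤ #C * B := by
  classical
  set I := V.powerset.filter fun C : Finset α => (C : Set α).Pairwise (fun x y => ¬ R x y)
  obtain ⟨C, hC, hmax⟩ := I.exists_max_image card ⟨∅, by simp [I]⟩
  rw [mem_filter, mem_powerset] at hC
  obtain ⟨hCV, hCR⟩ := hC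
  have hcover : ∀ v ∈ V, ∃ c ∈ C, R c v := by
    intro v hv
    by_contra! hfar
    have hvC : v ∉ C := fun h => hfar v h (hrefl v)
    have hins : insert v C ∈ I := by
      rw [mem_filter, mem_powerset, coe_insert]
      exact ⟨insert_subset hv hCV, hCR.insert fun c hc _ =>
        ⟨fun h => hfar c hc (hsymm _ _ h), hfar c hc⟩⟩
    have := hmax _ hins
    rw [card_insert_of_notMem hvC] at this
    omega
  refine ⟨C, hCV, hCR, ?_⟩
  calc #V ≤ #(C.biUnion fun c => {v ∈ V | R c v}) := card_le_card fun v hv => by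
        obtain ⟨c, hc, hcv⟩ := hcover v hv
        exact mem_biUnion.2 ⟨c, hc, mem_filter.2 ⟨hv, hcv⟩⟩
    _ ≤ #C * B := card_biUnion_le_card_mul _ _ _ fun c hc => hB c (hCV hc)

section HammingCount

variable {ι α : Type*} [Fintype ι] [DecidableEq ι] [DecidableEq α]

theorem card_filter_piFinset_filter_ne_eq (T : Finset α) (c : ι → α) (hc : ∀ i, c i ∈ T)
    (D : Finset ι) :
    #{v ∈ Fintype.piFinset (fun _ : ι => T) | ({i | v i ≠ c i} : Finset ι) = D} =
      (#T - 1) ^ #D := by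
  have hset : {v ∈ Fintype.piFinset (fun _ : ι => T) | ({i | v i ≠ c i} : Finset ι) = D} =
      Fintype.piFinset fun i => if i ∈ D then T.erase (c i) else {c i} := by
    ext v
    simp only [mem_filter, Fintype.mem_piFinset, Finset.ext_iff, Finset.mem_filter, mem_univ,
      true_and]
    constructor
    · rintro ⟨hT, hD⟩ i
      split_ifs with hi
      · exact mem_erase.2 ⟨(hD i).2 hi, hT i⟩
      · exact mem_singleton.2 (not_not.1 fun h => hi ((hD i).1 h))
    · intro h
      refine ⟨fun i => ?_, fun i => ?_⟩
      · have := h i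
        split_ifs at this
        · exact mem_of_mem_erase this
        · rw [mem_singleton.1 this]; exact hc i
      · have := h i
        split_ifs at this with hi
        · exact ⟨fun _ => hi, fun _ => ne_of_mem_erase this⟩
        · exact ⟨fun h' => absurd (mem_singleton.1 this) h', fun h' => absurd h' hi⟩
  rw [hset, Fintype.card_piFinset]
  calc ∏ i, #(if i ∈ D then T.erase (c i) else {c i}) = ∏ i, if i ∈ D then #T - 1 else 1 :=
        prod_congr rfl fun i _ => by split_ifs <;> simp [card_erase_of_mem (hc i)]
    _ = (#T - 1) ^ #D := by rw [prod_ite_mem, univ_inter, prod_const]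

theorem card_hammingSphere (T : Finset α) (c : ι → α) (hc : ∀ i, c i ∈ T) (t : ℕ) :
    #{v ∈ Fintype.piFinset (fun _ : ι => T) | hammingDist v c = t} =
      (Fintype.card ι).choose t * (#T - 1) ^ t := by
  have hset : {v ∈ Fintype.piFinset (fun _ : ι => T) | hammingDist v c = t} =
      (powersetCard t univ).biUnion
        fun D => {v ∈ Fintype.piFinset (fun _ : ι => T) | ({i | v i ≠ c i} : Finset ι) = D} := by
    ext v
    simp [hammingDist, and_comm]
  rw [hset, card_biUnion, sum_congr rfl fun D hD => by
      rw [card_filter_piFinset_filter_ne_eq T c hc, (mem_powersetCard_univ.1 hD)],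
    sum_const, card_powersetCard, card_univ, smul_eq_mul]
  intro D _ D' _ hDD'
  exact disjoint_filter.2 fun v _ h h' => hDD' (h.symm.trans h')

theorem card_hammingBall (T : Finset α) (c : ι → α) (hc : ∀ i, c i ∈ T) (r : ℕ) :
    #{v ∈ Fintype.piFinset (fun _ : ι => T) | hammingDist v c ≤ r} =
      ∑ t ∈ range (r + 1), (Fintype.card ι).choose t * (#T - 1) ^ t := by
  have hset : {v ∈ Fintype.piFinset (fun _ : ι => T) | hammingDist v c ≤ r} =
      (range (r + 1)).biUnion
        fun t => {v ∈ Fintype.piFinset (fun _ : ι => T) | hammingDist v c = t} := by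
    ext v
    simp [and_comm]
  rw [hset, card_biUnion]
  · exact sum_congr rfl fun t _ => card_hammingSphere T c hc t
  intro t _ t' _ htt'
  exact disjoint_filter.2 fun v _ h h' => htt' (h.symm.trans h')

theorem exists_subset_hammingSphere_pairwise_lt_hammingDist (T : Finset α) (c : ι → α)
    (hc : ∀ i, c i ∈ T) (s r : ℕ) :
    ∃ C ⊆ {v ∈ Fintype.piFinset (fun _ : ι => T) | hammingDist v c = s},
      (C : Set (ι → α)).Pairwise (fun x y => r < hammingDist x y) ∧
      (Fintype.card ι).choose s * (#T - 1) ^ s ≤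
        #C * ∑ t ∈ range (r + 1), (Fintype.card ι).choose t * (#T - 1) ^ t := by
  set V := {v ∈ Fintype.piFinset (fun _ : ι => T) | hammingDist v c = s}
  have hball : ∀ w ∈ V, #{v ∈ V | hammingDist w v ≤ r} ≤
      ∑ t ∈ range (r + 1), (Fintype.card ι).choose t * (#T - 1) ^ t := by
    intro w hw
    have hwT : ∀ i, w i ∈ T := Fintype.mem_piFinset.1 (mem_filter.1 hw).1
    rw [← card_hammingBall T w hwT r]
    refine card_le_card fun v hv => ?_
    simp only [V, mem_filter] at hv ⊢
    exact ⟨hv.1.1, hammingDist_comm w v ▸ hv.2⟩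
  obtain ⟨C, hCV, hC, hcard⟩ := V.exists_pairwise_not_rel_card_le_card_mul
    (fun x y => hammingDist x y ≤ r) (fun x => by simp) (fun x y => by simp [hammingDist_comm])
    _ hball
  refine ⟨C, hCV, hC.mono' fun x y => Nat.lt_of_not_le, ?_⟩
  rwa [← card_hammingSphere T c hc s]

end HammingCount

theorem Nat.sub_mul_choose_le_mul_choose_succ {p s t : ℕ} (ht : t < s) :
    (p - s) * p.choose t ≤ s * p.choose (t + 1) :=
  calc (p - s) * p.choose t ≤ (p - t) * p.choose t := by gcongr
    _ = p.choose (t + 1) * (t + 1) := by rw [Nat.choose_succ_right_eq, mul_comm]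
    _ ≤ s * p.choose (t + 1) := by rw [mul_comm]; gcongr; omega

theorem sum_range_succ_le_two_mul {u : ℕ → ℝ} {m : ℕ} (hu₀ : 0 ≤ u 0)
    (hu : ∀ k < m, 2 * u k ≤ u (k + 1)) : ∑ k ∈ range (m + 1), u k ≤ 2 * u m := by
  induction m with
  | zero => simp only [zero_add, sum_range_one]; linarith
  | succ m ih =>
    rw [sum_range_succ]
    linarith [ih fun k hk => hu k (by omega), hu m (by omega)]

theorem sqrt_pow_mul_sum_range_le {u : ℕ → ℝ} {x : ℝ} {s : ℕ} (hx : 4 ≤ x) (hs : 1 ≤ s)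
    (hu₀ : ∀ k, 0 ≤ u k) (hu : ∀ k < s, x * u k ≤ u (k + 1)) :
    √x ^ s * ∑ k ∈ range ((s - 1) / 2 + 1), u k ≤ u s := by
  set r := (s - 1) / 2
  have hsqrt : 2 ≤ √x := Real.le_sqrt_of_sq_le (by linarith)
  have hsum : ∑ k ∈ range (r + 1), u k ≤ 2 * u r :=
    sum_range_succ_le_two_mul (hu₀ 0) fun k hk =>
      (mul_le_mul_of_nonneg_right (by linarith) (hu₀ k)).trans (hu k (by omega))
  have hgeom : x ^ (s - r) * u r ≤ u s := by
    have := geom_le (u := fun k => u (r + k)) (by linarith) (s - r)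
      fun k hk => hu (r + k) (by omega)
    simpa [show r + (s - r) = s by omega] using this
  calc √x ^ s * ∑ k ∈ range (r + 1), u k ≤ √x ^ s * 2 * u r := by
        rw [mul_assoc]; gcongr
    _ ≤ √x ^ (s + 1) * u r := by rw [pow_succ]; gcongr; exact hu₀ r
    _ ≤ √x ^ (2 * (s - r)) * u r := by
        gcongr
        exacts [hu₀ r, by linarith, by omega]
    _ = x ^ (s - r) * u r := by rw [pow_mul, Real.sq_sqrt (by linarith)]
    _ ≤ u s := hgeom

theorem exp_mul_log_mul_sum_choose_le {s p : ℕ} (hs : 1 ≤ s) (hp : 3 * s ≤ p) :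
    Real.exp ((s : ℝ) / 2 * Real.log (((p : ℝ) - s) / ((s : ℝ) / 2))) *
        ∑ t ∈ range ((s - 1) / 2 + 1), (p.choose t * 2 ^ t : ℝ) ≤ p.choose s * 2 ^ s := by
  set x := ((p : ℝ) - s) / ((s : ℝ) / 2)
  have hs₀ : (0 : ℝ) < s := by exact_mod_cast hs
  have hp' : (3 : ℝ) * s ≤ p := by exact_mod_cast hp
  have hx : 4 ≤ x := by rw [le_div_iff₀ (by positivity)]; linarith
  have hexp : Real.exp ((s : ℝ) / 2 * Real.log x) = √x ^ s := by
    rw [← Real.exp_log (Real.sqrt_pos.2 (by linarith : 0 < x)), ← Real.exp_nat_mul,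
      Real.log_sqrt (by linarith)]
    ring_nf
  rw [hexp]
  refine sqrt_pow_mul_sum_range_le hx hs (fun k => by positivity) fun t ht => ?_
  have hchoose : ((p - s : ℕ) : ℝ) * p.choose t ≤ s * p.choose (t + 1) := by
    exact_mod_cast Nat.sub_mul_choose_le_mul_choose_succ ht
  rw [Nat.cast_sub (by omega)] at hchoose
  have : x * p.choose t = 2 * (((p : ℝ) - s) * p.choose t) / s := by
    simp only [x]; field_simp
  rw [← mul_assoc, this, div_mul_eq_mul_div, div_le_iff₀ hs₀, pow_succ]
  nlinarith [pow_pos (two_pos (α := ℝ)) t]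

section Ternary

variable {ι : Type*} [Fintype ι] {a : ℝ}

theorem sum_sq_eq_hammingNorm_mul_sq {θ : ι → ℝ} (hθ : ∀ i, θ i ∈ ({-a, 0, a} : Finset ℝ)) :
    ∑ i, θ i ^ 2 = hammingNorm θ * a ^ 2 := by
  have hsq : ∀ i, θ i ^ 2 = if θ i ≠ 0 then a ^ 2 else 0 := fun i => by
    have := hθ i
    simp only [mem_insert, mem_singleton] at this
    rcases this with h | h | h <;> by_cases ha : a = 0 <;> simp [h, ha]
  simp_rw [hsq, ← sum_filter, sum_const, nsmul_eq_mul, hammingNorm]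

theorem hammingDist_mul_sq_le_sum_sq_sub {θ θ' : ι → ℝ}
    (hθ : ∀ i, θ i ∈ ({-a, 0, a} : Finset ℝ)) (hθ' : ∀ i, θ' i ∈ ({-a, 0, a} : Finset ℝ)) :
    hammingDist θ θ' * a ^ 2 ≤ ∑ i, (θ i - θ' i) ^ 2 := by
  have hsq : ∀ i, (if θ i ≠ θ' i then a ^ 2 else 0) ≤ (θ i - θ' i) ^ 2 := fun i => by
    have h := hθ i
    have h' := hθ' i
    simp only [mem_insert, mem_singleton] at h h'
    split_ifs with hne
    · rcases h with h | h | h <;> rcases h' with h' | h' | h' <;> rw [h, h'] at hne ⊢ <;>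
        first | exact absurd rfl hne | nlinarith [sq_nonneg a]
    · positivity
  calc (hammingDist θ θ' : ℝ) * a ^ 2 = ∑ i, if θ i ≠ θ' i then a ^ 2 else 0 := by
        rw [← sum_filter, sum_const, nsmul_eq_mul, hammingDist]
    _ ≤ ∑ i, (θ i - θ' i) ^ 2 := sum_le_sum fun i _ => hsq i

theorem card_neg_zero_self (ha : a ≠ 0) : #({-a, 0, a} : Finset ℝ) = 3 :=
  card_eq_three.2 ⟨-a, 0, a, neg_ne_zero.2 ha, fun h => ha (by linarith), ha.symm, rfl⟩

theorem sum_sq_sub_le_four_mul_sq {θ θ' : ι → ℝ} {s : ℕ}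
    (hθ : ∀ i, θ i ∈ ({-a, 0, a} : Finset ℝ)) (hθ' : ∀ i, θ' i ∈ ({-a, 0, a} : Finset ℝ))
    (hs : hammingNorm θ = s) (hs' : hammingNorm θ' = s) :
    ∑ i, (θ i - θ' i) ^ 2 ≤ 4 * (s * a ^ 2) := by
  have hsub : ∑ i, (θ i - θ' i) ^ 2 ≤ 2 * ∑ i, θ i ^ 2 + 2 * ∑ i, θ' i ^ 2 := by
    rw [mul_sum, mul_sum, ← sum_add_distrib]
    exact sum_le_sum fun i _ => by nlinarith [sq_nonneg (θ i + θ' i)]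
  rw [sum_sq_eq_hammingNorm_mul_sq hθ, sum_sq_eq_hammingNorm_mul_sq hθ', hs, hs'] at hsub
  linarith

end Ternary

/-- Varshamov–Gilbert-type packing of `s`-sparse ternary vectors: for `δ > 0` and
`1 ≤ s < p/3` there is a subset `Θ̃` of
`Θ(δ,s) = {θ ∈ {−δ√(2/s),0,δ√(2/s)}^p : ‖θ‖₀ = s}` of cardinality at least
`exp((s/2) log((p−s)/(s/2)))` whose distinct elements satisfy
`δ² ≤ ‖θ − θ'‖₂² ≤ 8δ²`. -/
theorem stmt17 (δ : ℝ) (hδ : 0 < δ) (s p : ℕ) (hs : 1 ≤ s) (hsp : (s : ℝ) < (p : ℝ) / 3) :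
    ∃ Θ : Finset (Fin p → ℝ),
      (∀ θ ∈ Θ,
        (∀ i, θ i ∈ ({-(δ * Real.sqrt (2 / s)), 0, δ * Real.sqrt (2 / s)} : Set ℝ)) ∧
        (Finset.univ.filter (fun i => θ i ≠ 0)).card = s) ∧
      Real.exp ((s : ℝ) / 2 * Real.log (((p : ℝ) - s) / ((s : ℝ) / 2))) ≤ (Θ.card : ℝ) ∧
      ∀ θ ∈ Θ, ∀ θ' ∈ Θ, θ ≠ θ' →
        δ ^ 2 ≤ (∑ i, (θ i - θ' i) ^ 2) ∧ (∑ i, (θ i - θ' i) ^ 2) ≤ 8 * δ ^ 2 := by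
  set a := δ * √(2 / s)
  have hp : 3 * s ≤ p := by exact_mod_cast (by linarith : (3 : ℝ) * s ≤ p)
  have ha : (s : ℝ) * a ^ 2 = 2 * δ ^ 2 := by
    rw [mul_pow, Real.sq_sqrt (by positivity)]; field_simp
  obtain ⟨Θ, hΘV, hΘsep, hΘcard⟩ := exists_subset_hammingSphere_pairwise_lt_hammingDist
    {-a, 0, a} (0 : Fin p → ℝ) (by simp) s ((s - 1) / 2)
  rw [card_neg_zero_self (by positivity), Fintype.card_fin] at hΘcard
  have hΘ : ∀ θ ∈ Θ, (∀ i, θ i ∈ ({-a, 0, a} : Finset ℝ)) ∧ hammingNorm θ = s := fun θ hθ => by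
    simpa [← hammingDist_zero_right] using hΘV hθ
  refine ⟨Θ, fun θ hθ => ⟨fun i => by simpa using (hΘ θ hθ).1 i, (hΘ θ hθ).2⟩, ?_,
    fun θ hθ θ' hθ' hne => ⟨?_, ?_⟩⟩
  · have hball : (0 : ℝ) < ∑ t ∈ range ((s - 1) / 2 + 1), (p.choose t * 2 ^ t : ℝ) :=
      sum_pos' (fun t _ => by positivity) ⟨0, by simp, by simp⟩
    refine le_of_mul_le_mul_right ((exp_mul_log_mul_sum_choose_le hs hp).trans ?_) hball
    exact_mod_cast hΘcard
  · have hsep : (s : ℝ) ≤ 2 * hammingDist θ θ' := by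
      have := hΘsep hθ hθ' hne
      exact_mod_cast (by omega : s ≤ 2 * hammingDist θ θ')
    nlinarith [hammingDist_mul_sq_le_sum_sq_sub (hΘ θ hθ).1 (hΘ θ' hθ').1, sq_nonneg a]
  · linarith [sum_sq_sub_le_four_mul_sq (hΘ θ hθ).1 (hΘ θ' hθ').1 (hΘ θ hθ).2 (hΘ θ' hθ').2]
end
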